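/- arXiv:2112.05279 — 3 statements merged into one kernel-verified Lean document; each statement's English description precedes it below -/
import Mathlib

section
/- For positive integers k and j, p_{≤k}(j) = Σ_{m≥0} (−1)^m S_k(m;j), where S_k(m;j) = Σ p(j − Σ_{i=1}^m (k + r_i)), the inner sum ranging over strictly increasing sequences 1 ≤ r_1 < r_2 < ⋯ < r_m of positive integers with r_1 + ⋯ + r_m ≤ j − mk. -/
open Finset

/-- number of partitions of `n` -/
def pcount (n : ℕ) : ℕ := Fintype.card (Nat.Partition n)

/-- partitions of `n` with at most `k` parts -/
def pleParts (k n : ℕ) : ℕ :=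
  (Finset.univ.filter (fun π : Nat.Partition n => π.parts.card ≤ k)).card

/-- partitions of `n` with at most `k` parts divisible by `A` -/
def pleA (A k n : ℕ) : ℕ :=
  (Finset.univ.filter
    (fun π : Nat.Partition n => (π.parts.filter (fun r => A ∣ r)).card ≤ k)).card

/-- partitions of `n` with exactly `k` parts divisible by `A` -/
def pexact (A k n : ℕ) : ℕ :=
  (Finset.univ.filter
    (fun π : Nat.Partition n => (π.parts.filter (fun r => A ∣ r)).card = k)).card

/-- `A`-regular partitions of `n` -/
def preg (A n : ℕ) : ℕ :=
  (Finset.univ.filter (fun π : Nat.Partition n => ∀ r ∈ π.parts, ¬ A ∣ r)).card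

/-- the Erdős–Lehner sums `S_k(m;j)` -/
def Sk (k m j : ℕ) : ℕ :=
  ∑ R ∈ ((Finset.Icc 1 j).powersetCard m).filter (fun R => ∑ r ∈ R, (k + r) ≤ j),
    pcount (j - ∑ r ∈ R, (k + r))

/-!
Conjugating partitions (transposing Young diagrams) turns "at most `k` parts" into "every part
is at most `k`", i.e. "no part equals `k + r` for some `1 ≤ r ≤ j`". Inclusion–exclusion over the
set `R` of forbidden values `r` gives the alternating sum, and the partitions of `j` containing the
distinct parts `k + r` (`r ∈ R`) correspond, by deleting those parts, to the partitions of
`j - ∑ r ∈ R, (k + r)`. Grouping the sets `R` by their size `m` yields `S_k(m;j)`.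
-/

namespace YoungDiagram

lemma card_transpose (μ : YoungDiagram) : μ.transpose.card = μ.card := by
  simp [YoungDiagram.card, transpose]

lemma card_eq_sum_rowLens (μ : YoungDiagram) : μ.card = μ.rowLens.sum := by
  have hrows : μ.card = ∑ i ∈ range (μ.colLen 0), μ.rowLen i := by
    refine (card_eq_sum_card_fiberwise fun c hc => ?_).trans
      (sum_congr rfl fun i _ => (μ.rowLen_eq_card).symm)
    exact mem_range.2 (mem_iff_lt_colLen.1 (μ.up_left_mem le_rfl (Nat.zero_le _) hc))
  rw [hrows]
  rfl

lemma rowLen_zero_le_iff (μ : YoungDiagram) {k : ℕ} :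
    μ.rowLen 0 ≤ k ↔ ∀ x ∈ μ.rowLens, x ≤ k := by
  simp only [rowLens, List.mem_map, List.mem_range, forall_exists_index, and_imp,
    forall_apply_eq_imp_iff₂]
  refine ⟨fun h i _ => (μ.rowLen_anti 0 i i.zero_le).trans h, fun h => ?_⟩
  rcases Nat.eq_zero_or_pos (μ.rowLen 0) with h0 | hpos
  · simp [h0]
  · exact h 0 (mem_iff_lt_colLen.1 (mem_iff_lt_rowLen.2 hpos))

end YoungDiagram

namespace Nat.Partition

variable {n : ℕ}

def sortedParts (π : Nat.Partition n) : List ℕ := π.parts.sort (· ≥ ·)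

lemma coe_sortedParts (π : Nat.Partition n) : (π.sortedParts : Multiset ℕ) = π.parts :=
  Multiset.sort_eq _ _

lemma mem_sortedParts {π : Nat.Partition n} {x : ℕ} : x ∈ π.sortedParts ↔ x ∈ π.parts := by
  rw [← Multiset.mem_coe, coe_sortedParts]

def toYoungDiagram (π : Nat.Partition n) : YoungDiagram :=
  YoungDiagram.ofRowLens _ (Multiset.pairwise_sort π.parts (· ≥ ·)).sortedGE

lemma rowLens_toYoungDiagram (π : Nat.Partition n) : π.toYoungDiagram.rowLens = π.sortedParts :=
  YoungDiagram.rowLens_ofRowLens_eq_self fun _ hx => π.parts_pos (mem_sortedParts.1 hx)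

lemma card_toYoungDiagram (π : Nat.Partition n) : π.toYoungDiagram.card = n := by
  rw [YoungDiagram.card_eq_sum_rowLens, rowLens_toYoungDiagram, ← Multiset.sum_coe,
    coe_sortedParts, π.parts_sum]

def conj (π : Nat.Partition n) : Nat.Partition n where
  parts := π.toYoungDiagram.transpose.rowLens
  parts_pos hi := π.toYoungDiagram.transpose.pos_of_mem_rowLens _ hi
  parts_sum := by
    rw [Multiset.sum_coe, ← YoungDiagram.card_eq_sum_rowLens, YoungDiagram.card_transpose,
      card_toYoungDiagram]

lemma sortedParts_conj (π : Nat.Partition n) :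
    π.conj.sortedParts = π.toYoungDiagram.transpose.rowLens :=
  List.Perm.eq_of_pairwise' (Multiset.pairwise_sort _ _)
    π.toYoungDiagram.transpose.rowLens_sorted.pairwise
    (Multiset.coe_eq_coe.1 (coe_sortedParts _))

lemma toYoungDiagram_conj (π : Nat.Partition n) :
    π.conj.toYoungDiagram = π.toYoungDiagram.transpose := by
  conv_rhs => rw [← YoungDiagram.ofRowLens_to_rowLens_eq_self (μ := π.toYoungDiagram.transpose)]
  unfold toYoungDiagram
  congr 1
  exact sortedParts_conj π

lemma conj_conj (π : Nat.Partition n) : π.conj.conj = π := by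
  ext1
  change (π.conj.toYoungDiagram.transpose.rowLens : Multiset ℕ) = π.parts
  rw [toYoungDiagram_conj, YoungDiagram.transpose_transpose, rowLens_toYoungDiagram,
    coe_sortedParts]

lemma card_parts_conj (π : Nat.Partition n) : π.conj.parts.card = π.toYoungDiagram.rowLen 0 := by
  change π.toYoungDiagram.transpose.rowLens.length = _
  rw [YoungDiagram.length_rowLens, YoungDiagram.colLen_transpose]

lemma card_parts_conj_le_iff (π : Nat.Partition n) {k : ℕ} :
    π.conj.parts.card ≤ k ↔ ∀ r ∈ π.parts, r ≤ k := by
  simp only [card_parts_conj, YoungDiagram.rowLen_zero_le_iff, rowLens_toYoungDiagram,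
    mem_sortedParts]

lemma card_filter_card_parts_le (k : ℕ) :
    #{π : Nat.Partition n | π.parts.card ≤ k} = #{π : Nat.Partition n | ∀ r ∈ π.parts, r ≤ k} := by
  refine card_nbij' conj conj (fun π hπ => ?_) (fun π hπ => ?_)
    (fun π _ => conj_conj π) (fun π _ => conj_conj π)
  · simpa [← card_parts_conj_le_iff, conj_conj] using hπ
  · simpa [card_parts_conj_le_iff] using hπ

lemma sum_le_of_le_parts {M : Multiset ℕ} {π : Nat.Partition n} (h : M ≤ π.parts) : M.sum ≤ n := by
  obtain ⟨N, hN⟩ := le_iff_exists_add.1 h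
  rw [← π.parts_sum, hN, Multiset.sum_add]
  exact Nat.le_add_right _ _

def partitionWithSubPartsEquiv {M : Multiset ℕ} (hM : ∀ m ∈ M, 0 < m) (h : M.sum ≤ n) :
    {π : n.Partition // M ≤ π.parts} ≃ (n - M.sum).Partition where
  toFun π := by
    refine ⟨π.1.parts - M, fun hi => π.1.parts_pos (Multiset.mem_of_le tsub_le_self hi), ?_⟩
    have hs := congrArg Multiset.sum (tsub_add_cancel_of_le π.2)
    rw [Multiset.sum_add, π.1.parts_sum] at hs
    omega
  invFun μ := by
    refine ⟨⟨μ.parts + M, fun hi => (Multiset.mem_add.1 hi).elim μ.parts_pos (hM _), ?_⟩,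
      Multiset.le_add_left _ _⟩
    rw [Multiset.sum_add, μ.parts_sum]
    omega
  left_inv π := Subtype.ext <| Partition.ext <| tsub_add_cancel_of_le π.2
  right_inv μ := Partition.ext <| add_tsub_cancel_right _ _

lemma card_filter_le_parts {M : Multiset ℕ} (hM : ∀ m ∈ M, 0 < m) :
    #{π : n.Partition | M ≤ π.parts} = if M.sum ≤ n then pcount (n - M.sum) else 0 := by
  split_ifs with h
  · rw [pcount, ← Fintype.card_congr (partitionWithSubPartsEquiv hM h), Fintype.card_subtype]
  · exact Finset.card_eq_zero.2 (filter_eq_empty_iff.2 fun π _ hle => h (sum_le_of_le_parts hle))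

lemma map_add_le_parts_iff (π : n.Partition) (k : ℕ) (R : Finset ℕ) :
    R.val.map (k + ·) ≤ π.parts ↔ ∀ r ∈ R, k + r ∈ π.parts := by
  rw [Multiset.le_iff_subset (R.nodup.map (add_right_injective k))]
  simp [Multiset.subset_iff]

lemma forall_parts_le_iff (π : n.Partition) (k : ℕ) :
    (∀ r ∈ π.parts, r ≤ k) ↔ ∀ r ∈ Icc 1 n, k + r ∉ π.parts := by
  refine ⟨fun h r hr hmem => ?_, fun h a ha => ?_⟩
  · have := h _ hmem
    have := (mem_Icc.1 hr).1
    omega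
  · by_contra hlt
    have := π.le_of_mem_parts ha
    exact h (a - k) (mem_Icc.2 ⟨by omega, by omega⟩) (by rwa [Nat.add_sub_cancel' (by omega)])

end Nat.Partition

lemma Sk_eq_sum_card (k m j : ℕ) :
    Sk k m j = ∑ R ∈ (Icc 1 j).powersetCard m, #{π : j.Partition | ∀ r ∈ R, k + r ∈ π.parts} := by
  rw [Sk, sum_filter]
  refine sum_congr rfl fun R hR => ?_
  have hpos : ∀ p ∈ R.val.map (k + ·), 0 < p := by
    simp only [Multiset.mem_map, Finset.mem_val]
    rintro _ ⟨r, hr, rfl⟩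
    have := (mem_Icc.1 ((mem_powersetCard.1 hR).1 hr)).1
    omega
  simp_rw [← Nat.Partition.map_add_le_parts_iff, Nat.Partition.card_filter_le_parts hpos]
  -- `∑ r ∈ R, (k + r)` unfolds to the sum of the multiset `R.val.map (k + ·)`
  rfl

theorem stmt2_general (k j : ℕ) :
    (pleParts k j : ℤ) = ∑ m ∈ Finset.range (j + 1), (-1 : ℤ) ^ m * Sk k m j := by
  have hsmall : ({π : j.Partition | ∀ r ∈ π.parts, r ≤ k} : Finset _)
      = (Icc 1 j).inf fun r => ({π : j.Partition | k + r ∈ π.parts} : Finset _)ᶜ := by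
    ext π
    simp [Nat.Partition.forall_parts_le_iff, mem_inf]
  rw [pleParts, Nat.Partition.card_filter_card_parts_le, hsmall,
    inclusion_exclusion_card_inf_compl, sum_powerset, Nat.card_Icc, Nat.add_sub_cancel]
  refine sum_congr rfl fun m _ => ?_
  rw [Sk_eq_sum_card, Nat.cast_sum, mul_sum]
  refine sum_congr rfl fun R hR => ?_
  rw [(mem_powersetCard.1 hR).2]
  congr 3
  ext π
  simp [mem_inf]

theorem stmt2 (k j : ℕ) (hk : 1 ≤ k) (hj : 1 ≤ j) :
    (pleParts k j : ℤ) = ∑ m ∈ Finset.range (j + 1), (-1 : ℤ) ^ m * Sk k m j :=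
  stmt2_general k j
end

section
/- For an integer A ≥ 2 and k ≥ 0, the generating function Σ_{n≥0} p_{≤k}(A;n) q^n equals (q^A;q^A)_∞ / ((q;q)_∞ (q^A;q^A)_k), where (a;q)_k = Π_{j=0}^{k−1}(1 − a q^j). -/
open Finset

/-!
Let `F_k = ∑ₙ p_{≤k}(A;n) qⁿ`. Subtracting `A` from each part divisible by `A` maps the
partitions of `n` with exactly `k + 1` such parts bijectively onto the partitions of
`n - A(k + 1)` with at most `k + 1` such parts. Hence `F_{k+1} (1 - q^{A(k+1)}) = F_k`, and
`F_k (q^A;q^A)_k = F_0` is the generating function of `A`-regular partitions. Modulo `q^{N+1}`,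
`F_0` counts partitions into parts `i ≤ N` with `A ∤ i`, so it inverts `∏ (1 - qⁱ)` over those
`i`; the remaining factors of `(q;q)_N`, `∏_{i ≤ N, A ∣ i} (1 - qⁱ)`, agree with `(q^A;q^A)_N`
modulo `q^{N+1}`.
-/

open PowerSeries
open scoped PowerSeries.WithPiTopology

namespace PowerSeries

variable {R : Type*} [CommRing R]

theorem smodEq_X_pow_iff {f g : R⟦X⟧} {m : ℕ} :
    f ≡ g [SMOD Ideal.span {(X : R⟦X⟧) ^ m}] ↔ ∀ n < m, coeff n f = coeff n g := by
  simp only [SModEq.sub_mem, Ideal.mem_span_singleton, X_pow_dvd_iff, map_sub, sub_eq_zero]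

theorem one_sub_X_pow_smodEq_one {a m : ℕ} (h : m ≤ a) :
    (1 - X ^ a : R⟦X⟧) ≡ 1 [SMOD Ideal.span {(X : R⟦X⟧) ^ m}] := by
  rw [SModEq.sub_mem, sub_sub_cancel_left, neg_mem_iff, Ideal.mem_span_singleton]
  exact pow_dvd_pow X h

theorem prod_one_sub_X_pow_smodEq_filter_lt (s : Finset ℕ) (m : ℕ) :
    ∏ a ∈ s, (1 - X ^ a : R⟦X⟧) ≡ ∏ a ∈ s with a < m, (1 - X ^ a)
      [SMOD Ideal.span {(X : R⟦X⟧) ^ m}] := by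
  rw [← prod_filter_mul_prod_filter_not s (· < m)]
  have hlarge : ∏ a ∈ s with ¬a < m, (1 - X ^ a : R⟦X⟧) ≡ ∏ a ∈ s with ¬a < m, 1
      [SMOD Ideal.span {(X : R⟦X⟧) ^ m}] :=
    SModEq.prod fun a ha => one_sub_X_pow_smodEq_one (not_lt.1 (mem_filter.1 ha).2)
  simpa using (SModEq.refl (∏ a ∈ s with a < m, (1 - X ^ a : R⟦X⟧))).mul hlarge

theorem sum_range_C_mul_X_pow_smodEq_mk (c : ℕ → R) (N : ℕ) :
    ∑ n ∈ range N, C (c n) * X ^ n ≡ mk c [SMOD Ideal.span {(X : R⟦X⟧) ^ N}] :=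
  smodEq_X_pow_iff.2 fun n hn => by simp [coeff_X_pow, hn]

theorem mk_mul_one_sub_X_pow {c d : ℕ → R} {a : ℕ}
    (h : ∀ n, c n = d n + if a ≤ n then c (n - a) else 0) :
    mk c * (1 - X ^ a) = mk d := by
  ext n
  rw [mul_sub, mul_one, map_sub, coeff_mul_X_pow', coeff_mk, coeff_mk, h n]
  split_ifs <;> simp

end PowerSeries

theorem Nat.Partition.mk_card_restricted_mem_mul_prod (R : Type*) [CommRing R]
    (S : Finset ℕ) (hS : 0 ∉ S) :
    PowerSeries.mk (fun n ↦ (#(restricted n (· ∈ S)) : R)) * ∏ a ∈ S, (1 - X ^ a) = 1 := by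
  let _ : TopologicalSpace R := ⊥
  have _ : DiscreteTopology R := ⟨rfl⟩
  have hsucc_pred : ∀ a ∈ S, a - 1 + 1 = a := fun a ha => Nat.sub_add_cancel
    (Nat.one_le_iff_ne_zero.2 fun h => hS (h ▸ ha))
  rw [powerSeriesMk_card_restricted_eq_tprod R (· ∈ S), tprod_eq_prod (s := S.image (· - 1))]
  · rw [prod_image fun a ha b hb h => by rw [← hsucc_pred a ha, ← hsucc_pred b hb, h],
      ← prod_mul_distrib]
    refine prod_eq_one fun a ha => ?_
    rw [hsucc_pred a ha, if_pos ha]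
    simp_rw [pow_mul]
    exact WithPiTopology.tsum_pow_mul_one_sub_of_constantCoeff_eq_zero
      (by simp [ne_of_mem_of_not_mem ha hS])
  · intro i hi
    rw [if_neg]
    exact fun h => hi (mem_image.2 ⟨i + 1, h, rfl⟩)

namespace Nat

def lowerMultiple (A r : ℕ) : ℕ := if A ∣ r then r - A else r

def raiseMultiple (A r : ℕ) : ℕ := if A ∣ r then r + A else r

variable {A r : ℕ}

theorem dvd_raiseMultiple_iff : A ∣ raiseMultiple A r ↔ A ∣ r := by
  unfold raiseMultiple; split_ifs with h <;> simp [h]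

theorem lowerMultiple_raiseMultiple (A r : ℕ) : lowerMultiple A (raiseMultiple A r) = r := by
  unfold lowerMultiple raiseMultiple; split_ifs <;> simp_all

theorem raiseMultiple_lowerMultiple (hr : 0 < r) : raiseMultiple A (lowerMultiple A r) = r := by
  unfold lowerMultiple raiseMultiple
  split_ifs with h h'
  · exact Nat.sub_add_cancel (Nat.le_of_dvd hr h)
  · exact absurd (Nat.dvd_sub h dvd_rfl) h'
  · rfl

theorem raiseMultiple_ne (hA : 0 < A) (hr : 0 < r) : raiseMultiple A r ≠ A := by
  unfold raiseMultiple; split_ifs with h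
  · omega
  · rintro rfl; exact h dvd_rfl

theorem lowerMultiple_pos (hr : 0 < r) (hrA : r ≠ A) : 0 < lowerMultiple A r := by
  unfold lowerMultiple; split_ifs with h
  · have := Nat.le_of_dvd hr h; omega
  · exact hr

end Nat

namespace Multiset

variable {A : ℕ} {s t : Multiset ℕ}

/-- Parts equal to `A` would become `0` and are dropped; `raiseMultiples A (t.count A)` restores
them. -/
def lowerMultiples (A : ℕ) (t : Multiset ℕ) : Multiset ℕ :=
  (t.filter (· ≠ A)).map (Nat.lowerMultiple A)

def raiseMultiples (A j : ℕ) (s : Multiset ℕ) : Multiset ℕ :=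
  s.map (Nat.raiseMultiple A) + replicate j A

theorem raiseMultiples_lowerMultiples (ht : ∀ r ∈ t, 0 < r) :
    raiseMultiples A (t.count A) (lowerMultiples A t) = t := by
  rw [raiseMultiples, lowerMultiples, map_map, ← filter_eq']
  conv_rhs => rw [← filter_add_not (· ≠ A) t]
  congr 1
  · exact (map_congr rfl fun r hr => Nat.raiseMultiple_lowerMultiple
      (ht r (mem_of_mem_filter hr))).trans (map_id _)
  · simp

theorem lowerMultiples_raiseMultiples (hA : 0 < A) (hs : ∀ r ∈ s, 0 < r) (j : ℕ) :
    lowerMultiples A (raiseMultiples A j s) = s := by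
  rw [raiseMultiples, lowerMultiples, filter_add, filter_eq_self.2, filter_eq_nil.2, add_zero,
    map_map]
  · exact (map_congr rfl fun r _ => Nat.lowerMultiple_raiseMultiple A r).trans (map_id _)
  · intro r hr
    rw [eq_of_mem_replicate hr]
    exact not_not.2 rfl
  · intro r hr
    obtain ⟨a, ha, rfl⟩ := mem_map.1 hr
    exact Nat.raiseMultiple_ne hA (hs a ha)

theorem card_filter_dvd_raiseMultiples (j : ℕ) (s : Multiset ℕ) :
    ((raiseMultiples A j s).filter (A ∣ ·)).card = (s.filter (A ∣ ·)).card + j := by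
  have hrep : (replicate j A).filter (A ∣ ·) = replicate j A :=
    filter_eq_self.2 fun _ h => eq_of_mem_replicate h ▸ dvd_rfl
  simp [raiseMultiples, filter_map, Nat.dvd_raiseMultiple_iff, hrep]

theorem sum_raiseMultiples (j : ℕ) (s : Multiset ℕ) :
    (raiseMultiples A j s).sum = s.sum + A * ((s.filter (A ∣ ·)).card + j) := by
  induction s using Multiset.induction with
  | empty => simp [raiseMultiples, mul_comm]
  | cons a s ih =>
    rw [raiseMultiples, map_cons, cons_add, sum_cons, ← raiseMultiples, ih, filter_cons]
    unfold Nat.raiseMultiple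
    split_ifs <;> simp <;> ring

theorem card_filter_dvd_lowerMultiples_add_count (ht : ∀ r ∈ t, 0 < r) :
    ((lowerMultiples A t).filter (A ∣ ·)).card + t.count A = (t.filter (A ∣ ·)).card := by
  conv_rhs => rw [← raiseMultiples_lowerMultiples (A := A) ht, card_filter_dvd_raiseMultiples]

theorem sum_lowerMultiples_add (ht : ∀ r ∈ t, 0 < r) :
    (lowerMultiples A t).sum + A * (t.filter (A ∣ ·)).card = t.sum := by
  conv_rhs => rw [← raiseMultiples_lowerMultiples (A := A) ht, sum_raiseMultiples,
    card_filter_dvd_lowerMultiples_add_count ht]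

end Multiset

namespace Nat.Partition

variable {A m n : ℕ}

def lowerMultiples (A : ℕ) (π : n.Partition) (h : m + A * (π.parts.filter (A ∣ ·)).card = n) :
    m.Partition where
  parts := π.parts.lowerMultiples A
  parts_pos {r} hr := by
    obtain ⟨a, ha, rfl⟩ := Multiset.mem_map.1 hr
    obtain ⟨ha, haA⟩ := Multiset.mem_filter.1 ha
    exact Nat.lowerMultiple_pos (π.parts_pos ha) haA
  parts_sum := by
    have := Multiset.sum_lowerMultiples_add (A := A) fun r hr => π.parts_pos hr
    rw [π.parts_sum] at this
    omega

def raiseMultiples (hA : 0 < A) (σ : m.Partition) (j : ℕ)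
    (h : m + A * ((σ.parts.filter (A ∣ ·)).card + j) = n) : n.Partition where
  parts := σ.parts.raiseMultiples A j
  parts_pos {r} hr := by
    rcases Multiset.mem_add.1 hr with hr | hr
    · obtain ⟨a, ha, rfl⟩ := Multiset.mem_map.1 hr
      unfold Nat.raiseMultiple
      have := σ.parts_pos ha
      split_ifs <;> omega
    · exact Multiset.eq_of_mem_replicate hr ▸ hA
  parts_sum := by rw [Multiset.sum_raiseMultiples, σ.parts_sum, h]

theorem mul_card_filter_dvd_le (π : n.Partition) : A * (π.parts.filter (A ∣ ·)).card ≤ n := by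
  have := Multiset.sum_lowerMultiples_add (A := A) fun r hr => π.parts_pos hr
  rw [π.parts_sum] at this
  omega

end Nat.Partition

theorem pexact_succ {A k n : ℕ} (hA : 0 < A) (h : A * (k + 1) ≤ n) :
    pexact A (k + 1) n = pleA A (k + 1) (n - A * (k + 1)) := by
  unfold pexact pleA
  refine card_bij' (fun π hπ => π.lowerMultiples A (m := n - A * (k + 1)) ?_)
    (fun σ hσ => σ.raiseMultiples hA (k + 1 - (σ.parts.filter (A ∣ ·)).card) ?_) ?_ ?_ ?_ ?_
  · simp only [mem_filter, mem_univ, true_and] at hπ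
    rw [hπ]; omega
  · simp only [mem_filter, mem_univ, true_and] at hσ
    rw [Nat.add_sub_of_le hσ, Nat.sub_add_cancel h]
  · intro π hπ
    simp only [mem_filter, mem_univ, true_and] at hπ ⊢
    have := Multiset.card_filter_dvd_lowerMultiples_add_count (A := A) fun r hr => π.parts_pos hr
    dsimp only [Nat.Partition.lowerMultiples]
    omega
  · intro σ hσ
    simp only [mem_filter, mem_univ, true_and] at hσ ⊢
    dsimp only [Nat.Partition.raiseMultiples]
    rw [Multiset.card_filter_dvd_raiseMultiples]
    omega
  · intro π hπ
    simp only [mem_filter, mem_univ, true_and] at hπ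
    have := Multiset.card_filter_dvd_lowerMultiples_add_count (A := A) fun r hr => π.parts_pos hr
    ext1
    dsimp only [Nat.Partition.lowerMultiples, Nat.Partition.raiseMultiples]
    rw [show k + 1 - _ = π.parts.count A by omega]
    exact Multiset.raiseMultiples_lowerMultiples fun r hr => π.parts_pos hr
  · intro σ hσ
    ext1
    exact Multiset.lowerMultiples_raiseMultiples hA (fun r hr => σ.parts_pos hr) _

theorem pleA_succ {A : ℕ} (hA : 0 < A) (k n : ℕ) :
    pleA A (k + 1) n =
      pleA A k n + if A * (k + 1) ≤ n then pleA A (k + 1) (n - A * (k + 1)) else 0 := by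
  have hsplit : pleA A (k + 1) n = pleA A k n + pexact A (k + 1) n := by
    simp only [pleA, pexact, card_filter, ← sum_add_distrib]
    refine sum_congr rfl fun π _ => ?_
    split_ifs <;> omega
  rw [hsplit]
  split_ifs with h
  · rw [pexact_succ hA h]
  · suffices pexact A (k + 1) n = 0 by rw [this, add_zero]
    rw [pexact, card_eq_zero, filter_eq_empty_iff]
    intro π _ hπ
    have := π.mul_card_filter_dvd_le (A := A)
    rw [hπ] at this
    exact h this

theorem pleA_zero (A n : ℕ) : pleA A 0 n = preg A n := by
  simp only [pleA, preg, Nat.le_zero, Multiset.card_eq_zero, Multiset.filter_eq_nil]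

theorem preg_eq_card_restricted {A N n : ℕ} (hn : n ≤ N) :
    preg A n = #(Nat.Partition.restricted n (· ∈ (Icc 1 N).filter (¬ A ∣ ·))) := by
  unfold preg Nat.Partition.restricted
  congr 1
  refine filter_congr fun π _ => forall₂_congr fun r hr => ?_
  have := π.le_of_mem_parts hr
  have := π.parts_pos hr
  simp only [mem_filter, mem_Icc]
  omega

section

variable (R : Type*) [CommRing R] {A : ℕ}

theorem mk_pleA_mul_prod (hA : 0 < A) (k : ℕ) :
    mk (fun n ↦ (pleA A k n : R)) * ∏ j ∈ Icc 1 k, (1 - X ^ (A * j)) =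
      mk (fun n ↦ (preg A n : R)) := by
  induction k with
  | zero => simp [pleA_zero]
  | succ k ih =>
    have hrec := mk_mul_one_sub_X_pow (a := A * (k + 1))
      (c := fun n ↦ (pleA A (k + 1) n : R)) (d := fun n ↦ (pleA A k n : R)) fun n => by
      rw [pleA_succ hA k n]; push_cast; rfl
    rw [prod_Icc_succ_top (by omega), ← ih, ← hrec]
    ring

theorem prod_one_sub_X_pow_mul_smodEq (hA : 0 < A) (N : ℕ) :
    ∏ i ∈ Icc 1 N, (1 - X ^ (A * i) : R⟦X⟧) ≡ ∏ i ∈ Icc 1 N with A ∣ i, (1 - X ^ i)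
      [SMOD Ideal.span {(X : R⟦X⟧) ^ (N + 1)}] := by
  have hmultiples : (Icc 1 N).filter (A ∣ ·) = ((Icc 1 N).image (A * ·)).filter (· < N + 1) := by
    ext a
    simp only [mem_filter, mem_Icc, mem_image]
    constructor
    · rintro ⟨⟨ha1, haN⟩, i, rfl⟩
      exact ⟨⟨i, ⟨Nat.pos_of_mul_pos_left ha1, by nlinarith⟩, rfl⟩, by omega⟩
    · rintro ⟨⟨i, ⟨hi1, -⟩, rfl⟩, hiN⟩
      exact ⟨⟨Nat.mul_pos hA hi1, by omega⟩, dvd_mul_right A i⟩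
  rw [hmultiples, ← prod_image (f := fun a ↦ (1 - X ^ a : R⟦X⟧))
    fun i _ j _ h => Nat.eq_of_mul_eq_mul_left hA h]
  exact prod_one_sub_X_pow_smodEq_filter_lt _ _

theorem mk_preg_mul_prod_smodEq (hA : 0 < A) (N : ℕ) :
    mk (fun n ↦ (preg A n : R)) * ∏ i ∈ Icc 1 N, (1 - X ^ i) ≡ ∏ i ∈ Icc 1 N, (1 - X ^ (A * i))
      [SMOD Ideal.span {(X : R⟦X⟧) ^ (N + 1)}] := by
  set S := (Icc 1 N).filter (¬ A ∣ ·)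
  set D := (Icc 1 N).filter (A ∣ ·)
  have hpreg : mk (fun n ↦ (preg A n : R)) ≡
      mk (fun n ↦ (#(Nat.Partition.restricted n (· ∈ S)) : R))
      [SMOD Ideal.span {(X : R⟦X⟧) ^ (N + 1)}] := smodEq_X_pow_iff.2 fun n hn => by
    rw [coeff_mk, coeff_mk, preg_eq_card_restricted (N := N) (by omega)]
  have hS : mk (fun n ↦ (#(Nat.Partition.restricted n (· ∈ S)) : R)) * ∏ i ∈ S, (1 - X ^ i) = 1 :=
    Nat.Partition.mk_card_restricted_mem_mul_prod R S (by simp [S])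
  calc mk (fun n ↦ (preg A n : R)) * ∏ i ∈ Icc 1 N, (1 - X ^ i)
      = mk (fun n ↦ (preg A n : R)) * (∏ i ∈ S, (1 - X ^ i)) * ∏ i ∈ D, (1 - X ^ i) := by
        rw [← prod_filter_mul_prod_filter_not (Icc 1 N) (A ∣ ·)]; ring
    _ ≡ mk (fun n ↦ (#(Nat.Partition.restricted n (· ∈ S)) : R)) * (∏ i ∈ S, (1 - X ^ i)) *
          ∏ i ∈ D, (1 - X ^ i) [SMOD Ideal.span {(X : R⟦X⟧) ^ (N + 1)}] :=
        (hpreg.mul SModEq.rfl).mul SModEq.rfl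
    _ = ∏ i ∈ D, (1 - X ^ i) := by rw [hS, one_mul]
    _ ≡ ∏ i ∈ Icc 1 N, (1 - X ^ (A * i)) [SMOD Ideal.span {(X : R⟦X⟧) ^ (N + 1)}] :=
        (prod_one_sub_X_pow_mul_smodEq R hA N).symm

end

theorem stmt5 (A k : ℕ) (hA : 2 ≤ A) (N : ℕ) :
    (PowerSeries.coeff (R := ℤ) N)
      ((∑ n ∈ Finset.range (N + 1), PowerSeries.C (R := ℤ) (pleA A k n : ℤ) * PowerSeries.X ^ n) *
        (∏ i ∈ Finset.Icc 1 N, (1 - PowerSeries.X ^ i)) *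
        (∏ j ∈ Finset.Icc 1 k, (1 - PowerSeries.X ^ (A * j)))) =
    (PowerSeries.coeff (R := ℤ) N) (∏ i ∈ Finset.Icc 1 N, (1 - PowerSeries.X ^ (A * i))) := by
  have hA0 : 0 < A := by omega
  have htrunc := sum_range_C_mul_X_pow_smodEq_mk (fun n ↦ (pleA A k n : ℤ)) (N + 1)
  have hmain := mk_preg_mul_prod_smodEq ℤ hA0 N
  rw [← mk_pleA_mul_prod ℤ hA0 k, mul_right_comm] at hmain
  exact smodEq_X_pow_iff.1 (((htrunc.mul SModEq.rfl).mul SModEq.rfl).trans hmain) N N.lt_succ_self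
end

section
/- Given the Buryak–Feigin generating function, the coefficient of T^{2k} in the Poincaré polynomial P(X^{[n]}_{α,β};T) equals p_k(α+β; n), the number of partitions of n with exactly k parts divisible by α+β; in particular all odd-index Betti numbers vanish. -/
open Finset

/-!
Write `A = α + β` and `w i = T²` if `A ∣ i`, `w i = 1` otherwise. Counting partitions of `n` by
`T^(2 · #parts divisible by A)` gives polynomials `Q n` with `∑ Q n X^n = ∏ 1/(1 - w i X^i)`.
Exchanging the factors `1 - X^i`, `A ∣ i`, of `∏ (1 - X^i)` with the factors `1 - T² X^(A j)`
shows `(∑ Q n X^n) ∏ (1 - X^i) ∏ (1 - T² X^(A i)) = ∏ (1 - X^(A i))`, the relation imposed on `P`.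
Since `∏ (1 - X^i) ∏ (1 - T² X^(A i))` has constant term `1`, the relation determines `P n`, so
`P n = Q n`. All of this is done modulo `X^(N+1)`, where the truncated products in the
hypothesis agree with the infinite ones.
-/

open PowerSeries
open scoped Polynomial

theorem Multiset.prod_map_ite_one {α M : Type*} [CommMonoid M] (p : α → Prop) [DecidablePred p]
    (t : M) (s : Multiset α) :
    (s.map fun a => if p a then t else 1).prod = t ^ (s.filter p).card := by
  induction s using Multiset.induction_on with
  | empty => simp
  | cons a s ih => by_cases h : p a <;> simp [h, ih, pow_succ, mul_comm]

theorem Nat.Partition.coeff_genFun_pow {R : Type*} [CommSemiring R] (w : ℕ → R) (n : ℕ) :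
    coeff n (genFun fun i c => w i ^ c) = ∑ p : n.Partition, (p.parts.map w).prod := by
  classical
  simp only [coeff_genFun, Finsupp.prod, Multiset.toFinsupp_support, Multiset.toFinsupp_apply,
    prod_multiset_map_count]

namespace PowerSeries

variable {R : Type*} [CommRing R]

variable (R) in
noncomputable abbrev modXPow (n : ℕ) : R⟦X⟧ →+* R⟦X⟧ ⧸ Ideal.span {(X : R⟦X⟧) ^ n} :=
  Ideal.Quotient.mk _

theorem modXPow_eq_iff {n : ℕ} {f g : R⟦X⟧} :
    modXPow R n f = modXPow R n g ↔ ∀ m < n, coeff m f = coeff m g := by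
  simp only [modXPow, Ideal.Quotient.eq, Ideal.mem_span_singleton, X_pow_dvd_iff, map_sub,
    sub_eq_zero]

theorem modXPow_X_pow {n e : ℕ} (h : n ≤ e) : modXPow R n (X ^ e) = 0 :=
  Ideal.Quotient.eq_zero_iff_mem.mpr (Ideal.mem_span_singleton.mpr (pow_dvd_pow X h))

theorem modXPow_one_sub_C_mul_X_pow {n e : ℕ} (h : n ≤ e) (c : R) :
    modXPow R n (1 - C c * X ^ e) = 1 := by
  rw [map_sub, map_mul, modXPow_X_pow h, mul_zero, map_one, sub_zero]

theorem modXPow_one_sub_X_pow {n e : ℕ} (h : n ≤ e) : modXPow R n (1 - X ^ e) = 1 := by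
  simpa using modXPow_one_sub_C_mul_X_pow h (1 : R)

theorem modXPow_prod_Icc_of_le {N M : ℕ} (h : N ≤ M) (f : ℕ → R⟦X⟧)
    (hf : ∀ i, N < i → modXPow R (N + 1) (f i) = 1) :
    modXPow R (N + 1) (∏ i ∈ Icc 1 M, f i) = modXPow R (N + 1) (∏ i ∈ Icc 1 N, f i) := by
  rw [map_prod, map_prod]
  refine (prod_subset (Icc_subset_Icc_right h) fun i hi hiN => hf i ?_).symm
  simp only [mem_Icc, not_and, not_le] at hi hiN
  exact hiN hi.1

theorem coeff_eq_of_modXPow_mul_eq {N : ℕ} {f g u : R⟦X⟧} (hu : IsUnit (constantCoeff u))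
    (h : modXPow R (N + 1) (f * u) = modXPow R (N + 1) (g * u)) : coeff N f = coeff N g := by
  rw [map_mul, map_mul, ((isUnit_iff_constantCoeff.mpr hu).map _).mul_left_inj] at h
  exact modXPow_eq_iff.mp h N (Nat.lt_succ_self N)

theorem modXPow_mk_mul_eq_of_forall_coeff (P : ℕ → R) {u v : ℕ → R⟦X⟧}
    (hu : ∀ m N, m ≤ N → modXPow R (m + 1) (u N) = modXPow R (m + 1) (u m))
    (hv : ∀ m N, m ≤ N → modXPow R (m + 1) (v N) = modXPow R (m + 1) (v m))
    (h : ∀ N, coeff N ((∑ n ∈ range (N + 1), C (P n) * X ^ n) * u N) = coeff N (v N)) (N : ℕ) :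
    modXPow R (N + 1) (mk P * u N) = modXPow R (N + 1) (v N) := by
  refine modXPow_eq_iff.mpr fun m hm => ?_
  have htrunc : modXPow R (m + 1) (∑ n ∈ range (m + 1), C (P n) * X ^ n) =
      modXPow R (m + 1) (mk P) := modXPow_eq_iff.mpr fun j hj => by
    simp [hj]
  calc coeff m (mk P * u N)
      = coeff m ((∑ n ∈ range (m + 1), C (P n) * X ^ n) * u m) := by
        refine modXPow_eq_iff.mp ?_ m (Nat.lt_succ_self m)
        rw [map_mul, map_mul, htrunc, hu m N (by omega)]
    _ = coeff m (v m) := h m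
    _ = coeff m (v N) := modXPow_eq_iff.mp (hv m N (by omega)).symm m (Nat.lt_succ_self m)

theorem modXPow_prod_Icc_comp_mul {A : ℕ} (hA : 0 < A) (N : ℕ) (f : ℕ → R⟦X⟧)
    (hf : ∀ i, N < i → modXPow R (N + 1) (f i) = 1) :
    modXPow R (N + 1) (∏ i ∈ Icc 1 N, f (A * i)) =
      modXPow R (N + 1) (∏ i ∈ Icc 1 N with A ∣ i, f i) := by
  have hmultiples : {i ∈ Icc 1 N | A ∣ i} = {i ∈ Icc 1 N | A * i ≤ N}.image (A * ·) := by
    ext j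
    simp only [mem_filter, mem_Icc, mem_image]
    constructor
    · rintro ⟨⟨hj1, hjN⟩, i, rfl⟩
      exact ⟨i, ⟨⟨Nat.pos_of_mul_pos_left hj1, (Nat.le_mul_of_pos_left i hA).trans hjN⟩, hjN⟩,
        rfl⟩
    · rintro ⟨i, ⟨⟨hi1, -⟩, hiN⟩, rfl⟩
      exact ⟨⟨Nat.mul_pos hA hi1, hiN⟩, dvd_mul_right A i⟩
  rw [hmultiples, prod_image fun i _ j _ h => Nat.eq_of_mul_eq_mul_left hA h, map_prod, map_prod]
  refine (prod_subset (filter_subset _ _) fun i hi hiN => hf _ ?_).symm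
  simp only [mem_filter, hi, true_and, not_le] at hiN
  exact hiN

theorem modXPow_prod_one_sub_mul_prod_dvd {A : ℕ} (hA : 0 < A) (t : R) (N : ℕ) :
    modXPow R (N + 1) ((∏ i ∈ Icc 1 N, (1 - X ^ i)) * ∏ i ∈ Icc 1 N, (1 - C t * X ^ (A * i))) =
      modXPow R (N + 1) ((∏ i ∈ Icc 1 N, (1 - C (if A ∣ i then t else 1) * X ^ i)) *
        ∏ i ∈ Icc 1 N, (1 - X ^ (A * i))) := by
  have hmul (c : R) := modXPow_prod_Icc_comp_mul hA N (fun i => 1 - C c * X ^ i)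
    fun i hi => modXPow_one_sub_C_mul_X_pow hi c
  have hmul_one := hmul 1
  simp only [map_one, one_mul] at hmul_one
  have hite : ∀ i, 1 - C (if A ∣ i then t else 1) * X ^ i =
      if A ∣ i then 1 - C t * X ^ i else 1 - X ^ i := fun i => by
    split_ifs <;> simp
  rw [map_mul, map_mul, hmul t, hmul_one, prod_congr rfl fun i _ => hite i, prod_ite,
    ← prod_filter_mul_prod_filter_not (Icc 1 N) (A ∣ ·)]
  simp only [map_mul]
  ring

open WithPiTopology in
theorem one_add_tsum_pow_smul_mul_one_sub [TopologicalSpace R] [IsTopologicalRing R] [T2Space R]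
    (w : R) {i : ℕ} (hi : i ≠ 0) :
    (1 + ∑' j, w ^ (j + 1) • (X : R⟦X⟧) ^ (i * (j + 1))) * (1 - C w * X ^ i) = 1 := by
  have h0 : constantCoeff (C w * X ^ i : R⟦X⟧) = 0 := by simp [hi]
  convert tsum_pow_mul_one_sub_of_constantCoeff_eq_zero h0 using 2
  rw [(summable_pow_of_constantCoeff_eq_zero h0).tsum_eq_zero_add]
  simp [mul_pow, pow_mul, smul_eq_C_mul]

open WithPiTopology in
theorem modXPow_genFun_pow_mul_prod (w : ℕ → R) (N : ℕ) :
    modXPow R (N + 1) (Nat.Partition.genFun (fun i c => w i ^ c) *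
      ∏ i ∈ Icc 1 N, (1 - C (w i) * X ^ i)) = 1 := by
  -- With the discrete topology, `hasProd_genFun` says that every coefficient of the partial
  -- products of the factors `F i` is eventually that of `genFun`.
  let _ : TopologicalSpace R := ⊥
  have : DiscreteTopology R := ⟨rfl⟩
  set F : ℕ → R⟦X⟧ := fun i => 1 + ∑' j, w (i + 1) ^ (j + 1) • X ^ ((i + 1) * (j + 1))
  have hF : ∀ i, F i * (1 - C (w (i + 1)) * X ^ (i + 1)) = 1 := fun i =>
    one_add_tsum_pow_smul_mul_one_sub _ i.succ_ne_zero
  have hF_tail : ∀ i, N ≤ i → modXPow R (N + 1) (F i) = 1 := fun i hi => by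
    simpa [modXPow_one_sub_C_mul_X_pow (show N + 1 ≤ i + 1 by omega)] using
      congrArg (modXPow R (N + 1)) (hF i)
  have hlim := Nat.Partition.hasProd_genFun (fun i c => w i ^ c)
  simp only [HasProd, tendsto_iff_coeff_tendsto, nhds_discrete, Filter.tendsto_pure,
    SummationFilter.unconditional_filter] at hlim
  obtain ⟨s, hs, hcoeff⟩ := ((Filter.eventually_ge_atTop (range N)).and
    ((Filter.eventually_all_finset (range (N + 1))).mpr fun d _ => hlim d)).exists
  have hgenFun : modXPow R (N + 1) (Nat.Partition.genFun (fun i c => w i ^ c)) =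
      ∏ i ∈ range N, modXPow R (N + 1) (F i) := by
    rw [← (modXPow_eq_iff.mpr fun d hd => hcoeff d (mem_range.mpr hd)), map_prod]
    exact (prod_subset hs fun i _ hi => hF_tail i (by simpa using hi)).symm
  rw [map_mul, hgenFun, ← Ico_add_one_right_eq_Icc, prod_Ico_eq_prod_range, add_tsub_cancel_right,
    map_prod, ← prod_mul_distrib]
  refine prod_eq_one fun i _ => ?_
  rw [add_comm 1 i, ← map_mul, hF, map_one]

end PowerSeries

noncomputable def dvdPartsPoly (A n : ℕ) : ℤ[X] :=
  ∑ p : n.Partition, (Polynomial.X ^ 2) ^ (p.parts.filter (A ∣ ·)).card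

theorem coeff_dvdPartsPoly_two_mul (A k n : ℕ) :
    (dvdPartsPoly A n).coeff (2 * k) = pexact A k n := by
  simp only [dvdPartsPoly, pexact, ← pow_mul, Polynomial.finsetSum_coeff, Polynomial.coeff_X_pow,
    Nat.mul_left_cancel_iff two_pos, eq_comm (a := k), sum_boole]

theorem coeff_dvdPartsPoly_two_mul_add_one (A k n : ℕ) :
    (dvdPartsPoly A n).coeff (2 * k + 1) = 0 := by
  simp only [dvdPartsPoly, ← pow_mul, Polynomial.finsetSum_coeff, Polynomial.coeff_X_pow]
  exact sum_eq_zero fun p _ => if_neg (by omega)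

theorem mk_dvdPartsPoly (A : ℕ) :
    mk (dvdPartsPoly A) =
      Nat.Partition.genFun fun i c => (if A ∣ i then Polynomial.X ^ 2 else 1) ^ c := by
  ext n
  rw [coeff_mk, Nat.Partition.coeff_genFun_pow]
  simp only [Multiset.prod_map_ite_one, dvdPartsPoly]

theorem eq_dvdPartsPoly_of_forall_coeff {A : ℕ} (hA : 0 < A) (P : ℕ → ℤ[X])
    (hP : ∀ N : ℕ, coeff N ((∑ n ∈ range (N + 1), C (P n) * X ^ n) *
        (∏ i ∈ Icc 1 N, (1 - X ^ i)) * ∏ i ∈ Icc 1 N, (1 - C (Polynomial.X ^ 2) * X ^ (A * i))) =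
      coeff N (∏ i ∈ Icc 1 N, (1 - X ^ (A * i))))
    (n : ℕ) : P n = dvdPartsPoly A n := by
  set u : ℕ → ℤ[X]⟦X⟧ := fun N =>
    (∏ i ∈ Icc 1 N, (1 - X ^ i)) * ∏ i ∈ Icc 1 N, (1 - C (Polynomial.X ^ 2) * X ^ (A * i))
  set v : ℕ → ℤ[X]⟦X⟧ := fun N => ∏ i ∈ Icc 1 N, (1 - X ^ (A * i))
  have hAi : ∀ m i, m < i → m + 1 ≤ A * i := fun m i h =>
    (Nat.succ_le_of_lt h).trans (Nat.le_mul_of_pos_left i hA)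
  have hu : ∀ m N, m ≤ N → modXPow _ (m + 1) (u N) = modXPow _ (m + 1) (u m) := fun m N h => by
    simp only [u, map_mul]
    rw [modXPow_prod_Icc_of_le h _ fun i hi => modXPow_one_sub_X_pow hi,
      modXPow_prod_Icc_of_le h _ fun i hi => modXPow_one_sub_C_mul_X_pow (hAi m i hi) _]
  have hv : ∀ m N, m ≤ N → modXPow _ (m + 1) (v N) = modXPow _ (m + 1) (v m) := fun m N h =>
    modXPow_prod_Icc_of_le h _ fun i hi => modXPow_one_sub_X_pow (hAi m i hi)
  have hPuv := modXPow_mk_mul_eq_of_forall_coeff P hu hv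
    (fun N => by simpa only [mul_assoc] using hP N) n
  have hQuv : modXPow _ (n + 1) (mk (dvdPartsPoly A) * u n) = modXPow _ (n + 1) (v n) := by
    rw [map_mul, modXPow_prod_one_sub_mul_prod_dvd hA, ← map_mul, mk_dvdPartsPoly, ← mul_assoc,
      map_mul, modXPow_genFun_pow_mul_prod, one_mul]
  have hu_unit : IsUnit (constantCoeff (u n)) := by
    simp +contextual [u, map_prod, Nat.one_le_iff_ne_zero, hA.ne']
  simpa using coeff_eq_of_modXPow_mul_eq hu_unit (hPuv.trans hQuv.symm)

theorem stmt10_general (α β : ℕ) (hα : 0 < α)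
    (P : ℕ → Polynomial ℤ)
    (hP : ∀ N : ℕ,
      (PowerSeries.coeff (R := Polynomial ℤ) N)
        ((∑ n ∈ Finset.range (N + 1),
            PowerSeries.C (R := Polynomial ℤ) (P n) * PowerSeries.X ^ n) *
          (∏ i ∈ Finset.Icc 1 N, (1 - PowerSeries.X ^ i)) *
          (∏ i ∈ Finset.Icc 1 N,
            (1 - PowerSeries.C (R := Polynomial ℤ) (Polynomial.X ^ 2) *
              PowerSeries.X ^ ((α + β) * i)))) =
      (PowerSeries.coeff (R := Polynomial ℤ) N)
        (∏ i ∈ Finset.Icc 1 N, (1 - PowerSeries.X ^ ((α + β) * i)))) :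
    ∀ n k : ℕ, (P n).coeff (2 * k) = (pexact (α + β) k n : ℤ) ∧
      (P n).coeff (2 * k + 1) = 0 := by
  intro n k
  rw [eq_dvdPartsPoly_of_forall_coeff (by omega) P hP n]
  exact ⟨coeff_dvdPartsPoly_two_mul _ k n, coeff_dvdPartsPoly_two_mul_add_one _ k n⟩

theorem stmt10 (α β : ℕ) (hα : 0 < α) (hβ : 0 < β) (hcop : Nat.Coprime α β)
    (P : ℕ → Polynomial ℤ)
    (hP : ∀ N : ℕ,
      (PowerSeries.coeff (R := Polynomial ℤ) N)
        ((∑ n ∈ Finset.range (N + 1),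
            PowerSeries.C (R := Polynomial ℤ) (P n) * PowerSeries.X ^ n) *
          (∏ i ∈ Finset.Icc 1 N, (1 - PowerSeries.X ^ i)) *
          (∏ i ∈ Finset.Icc 1 N,
            (1 - PowerSeries.C (R := Polynomial ℤ) (Polynomial.X ^ 2) *
              PowerSeries.X ^ ((α + β) * i)))) =
      (PowerSeries.coeff (R := Polynomial ℤ) N)
        (∏ i ∈ Finset.Icc 1 N, (1 - PowerSeries.X ^ ((α + β) * i)))) :
    ∀ n k : ℕ, (P n).coeff (2 * k) = (pexact (α + β) k n : ℤ) ∧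
      (P n).coeff (2 * k + 1) = 0 :=
  stmt10_general α β hα P hP
end
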